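/- In a monoidal dagger category with duals, let (A, m, u; s) be an involution monoid and let p : A → B be a morphism with p† ∘ p = id_A which is an involution-preserving monoid homomorphism into a dagger Frobenius left-involution monoid (B, n, v; t). Then (A, m, u) is itself a dagger Frobenius monoid and s is its left involution; i.e., (A, m, u; s) is a dagger Frobenius left-involution monoid. -/

import Mathlib

/-! The Frobenius pairing `φ = u† ∘ m` controls both conclusions. Through the right duality,
morphisms `Z → A*` correspond bijectively to pairings `Z ⊗ A → I`, and `s_L` corresponds to `φ`.
Writing `⟨s⟩` for the pairing of `s`, `t ∘ p = p_* ∘ s` says `φ_B ∘ (p ⊗ id) = ⟨s⟩ ∘ (id ⊗ p†)`;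
precomposing with `id ⊗ p` and using `p† ∘ p = id` gives `⟨s⟩ = φ_A`, i.e. `s = s_L`.

A dagger Frobenius monoid satisfies `m = (φ ⊗ id) ∘ (id ⊗ m†)`, up to coherence isomorphisms. This
identity transports from `B` to `A` along `p`, since `m_A = p† ∘ m_B ∘ (p ⊗ p)` and the pairings
are related as above. Conversely, together with associativity it yields the first Frobenius law,
and the second is the dagger of the first. -/

open CategoryTheory MonoidalCategory

namespace QAlg

variable {C : Type*} [Category C] [MonoidalCategory C]

/-- A dagger structure on a category. -/
structure Dagger (C : Type*) [Category C] where
  dag : ∀ {X Y : C}, (X ⟶ Y) → (Y ⟶ X)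
  dag_dag : ∀ {X Y : C} (f : X ⟶ Y), dag (dag f) = f
  dag_id : ∀ X : C, dag (𝟙 X) = 𝟙 X
  dag_comp : ∀ {X Y Z : C} (f : X ⟶ Y) (g : Y ⟶ Z), dag (f ≫ g) = dag g ≫ dag f

/-- A monoidal dagger category: the dagger is monoidal and the coherence
isomorphisms are unitary. -/
structure MonoidalDagger (C : Type*) [Category C] [MonoidalCategory C] extends Dagger C where
  dag_tensorHom : ∀ {W X Y Z : C} (f : W ⟶ X) (g : Y ⟶ Z), dag (f ⊗ₘ g) = dag f ⊗ₘ dag g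
  dag_associator : ∀ X Y Z : C, dag (α_ X Y Z).hom = (α_ X Y Z).inv
  dag_leftUnitor : ∀ X : C, dag (λ_ X).hom = (λ_ X).inv
  dag_rightUnitor : ∀ X : C, dag (ρ_ X).hom = (ρ_ X).inv

/-- A morphism is unitary if its dagger is its inverse. -/
def Dagger.IsUnitary (D : Dagger C) {X Y : C} (f : X ⟶ Y) : Prop :=
  f ≫ D.dag f = 𝟙 X ∧ D.dag f ≫ f = 𝟙 Y

/-- Assigned duals and left/right duality morphisms, compatible with the dagger
(the compatibility equations between the duality morphisms, but *not* yet the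
condition `((-)^{*L})† = ((-)†)^{*L}`). -/
structure PreDuals (D : MonoidalDagger C) where
  star : C → C
  ε : ∀ A : C, 𝟙_ C ⟶ star A ⊗ A
  η : ∀ A : C, A ⊗ star A ⟶ 𝟙_ C
  εR : ∀ A : C, 𝟙_ C ⟶ A ⊗ star A
  ηR : ∀ A : C, star A ⊗ A ⟶ 𝟙_ C
  triangle_left₁ : ∀ A : C,
    (ρ_ A).inv ≫ (A ◁ ε A) ≫ (α_ A (star A) A).inv ≫ (η A ▷ A) ≫ (λ_ A).hom = 𝟙 A
  triangle_left₂ : ∀ A : C,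
    (λ_ (star A)).inv ≫ (ε A ▷ star A) ≫ (α_ (star A) A (star A)).hom ≫
      (star A ◁ η A) ≫ (ρ_ (star A)).hom = 𝟙 (star A)
  triangle_right₁ : ∀ A : C,
    (λ_ A).inv ≫ (εR A ▷ A) ≫ (α_ A (star A) A).hom ≫ (A ◁ ηR A) ≫ (ρ_ A).hom = 𝟙 A
  triangle_right₂ : ∀ A : C,
    (ρ_ (star A)).inv ≫ (star A ◁ εR A) ≫ (α_ (star A) A (star A)).inv ≫
      (ηR A ▷ star A) ≫ (λ_ (star A)).hom = 𝟙 (star A)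
  star_star : ∀ A : C, star (star A) = A
  star_tensor : ∀ A B : C, star (A ⊗ B) = star B ⊗ star A
  star_unit : star (𝟙_ C) = 𝟙_ C
  ε_eq_dag_ηR : ∀ A : C, ε A = D.dag (ηR A)
  η_eq_dag_εR : ∀ A : C, η A = D.dag (εR A)
  ε_eq_dag_η_star : ∀ A : C,
    ε A = D.dag (η (star A)) ≫ (star A ◁ eqToHom (star_star A))
  ε_eq_εR_star : ∀ A : C,
    ε A = εR (star A) ≫ (star A ◁ eqToHom (star_star A))
  η_eq_dag_ε_star : ∀ A : C,
    η A = (eqToHom (star_star A).symm ▷ star A) ≫ D.dag (ε (star A))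
  η_eq_ηR_star : ∀ A : C,
    η A = (eqToHom (star_star A).symm ▷ star A) ≫ ηR (star A)

variable {D : MonoidalDagger C}

/-- The left duality functor on morphisms. -/
def PreDuals.starL (P : PreDuals D) {A B : C} (f : A ⟶ B) : P.star B ⟶ P.star A :=
  (λ_ (P.star B)).inv ≫ (P.ε A ▷ P.star B) ≫ (α_ (P.star A) A (P.star B)).hom ≫
    (P.star A ◁ (f ▷ P.star B)) ≫ (P.star A ◁ P.η B) ≫ (ρ_ (P.star A)).hom

/-- The right duality functor on morphisms. -/
def PreDuals.starR (P : PreDuals D) {A B : C} (f : A ⟶ B) : P.star B ⟶ P.star A :=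
  (ρ_ (P.star B)).inv ≫ (P.star B ◁ P.εR A) ≫ (α_ (P.star B) A (P.star A)).inv ≫
    ((P.star B ◁ f) ▷ P.star A) ≫ (P.ηR B ▷ P.star A) ≫ (λ_ (P.star A)).hom

/-- A monoidal dagger category with duals: additionally `((-)^{*L})† = ((-)†)^{*L}`. -/
structure Duals (D : MonoidalDagger C) extends PreDuals D where
  dag_starL : ∀ {A B : C} (f : A ⟶ B),
    D.dag (toPreDuals.starL f) = toPreDuals.starL (D.dag f)

/-- The conjugation functor `f ↦ f_* = (f^*)† = (f†)^*`. -/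
def Duals.conj (P : Duals D) {A B : C} (f : A ⟶ B) : P.star A ⟶ P.star B :=
  D.dag (P.starL f)

/-- The abstract dimension of an object, `ε† ∘ ε`. -/
def Duals.dim (P : Duals D) (A : C) : 𝟙_ C ⟶ 𝟙_ C :=
  P.ε A ≫ D.dag (P.ε A)

/-- Monoid data on an object. -/
structure MonoidOn (A : C) where
  m : A ⊗ A ⟶ A
  u : 𝟙_ C ⟶ A

/-- The monoid axioms. -/
def MonoidOn.IsMonoid {A : C} (M : MonoidOn A) : Prop :=
  ((M.u ▷ A) ≫ M.m = (λ_ A).hom) ∧ ((A ◁ M.u) ≫ M.m = (ρ_ A).hom) ∧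
    ((M.m ▷ A) ≫ M.m = (α_ A A A).hom ≫ (A ◁ M.m) ≫ M.m)

/-- The dagger Frobenius condition: the adjoint comonoid satisfies the
Frobenius law with the monoid. -/
def MonoidOn.IsDagFrobenius {A : C} (M : MonoidOn A) (D : MonoidalDagger C) : Prop :=
  ((D.dag M.m ▷ A) ≫ (α_ A A A).hom ≫ (A ◁ M.m) = M.m ≫ D.dag M.m) ∧
    ((A ◁ D.dag M.m) ≫ (α_ A A A).inv ≫ (M.m ▷ A) = M.m ≫ D.dag M.m)

/-- The canonical left involution of a dagger Frobenius monoid. -/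
def Duals.sL (P : Duals D) {A : C} (M : MonoidOn A) : A ⟶ P.star A :=
  (ρ_ A).inv ≫ (A ◁ (P.ε (P.star A) ≫ (eqToHom (P.star_star A) ▷ P.star A))) ≫
    (α_ A A (P.star A)).inv ≫ ((M.m ≫ D.dag M.u) ▷ P.star A) ≫ (λ_ (P.star A)).hom

/-- The canonical right involution of a dagger Frobenius monoid. -/
def Duals.sR (P : Duals D) {A : C} (M : MonoidOn A) : A ⟶ P.star A :=
  (λ_ A).inv ≫ (P.ε A ▷ A) ≫ (α_ (P.star A) A A).hom ≫
    (P.star A ◁ (M.m ≫ D.dag M.u)) ≫ (ρ_ (P.star A)).hom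

/-- Multiplication of the conjugate monoid on `A*`. -/
def Duals.conjMul (P : Duals D) {A : C} (M : MonoidOn A) : P.star A ⊗ P.star A ⟶ P.star A :=
  eqToHom (P.star_tensor A A).symm ≫ P.conj M.m

/-- Unit of the conjugate monoid on `A*`. -/
def Duals.conjUnit (P : Duals D) {A : C} (M : MonoidOn A) : 𝟙_ C ⟶ P.star A :=
  eqToHom P.star_unit.symm ≫ P.conj M.u

/-- `s : A ⟶ A*` makes the monoid `M` into an involution monoid: it is a monoid
homomorphism to the conjugate monoid and satisfies `s_* ∘ s = id` (via `A** = A`). -/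
def Duals.IsInvolutionMonoid (P : Duals D) {A : C} (M : MonoidOn A) (s : A ⟶ P.star A) : Prop :=
  (M.m ≫ s = (s ⊗ₘ s) ≫ P.conjMul M) ∧ (M.u ≫ s = P.conjUnit M) ∧
    (s ≫ P.conj s ≫ eqToHom (P.star_star A) = 𝟙 A)

/-- Monoid homomorphism property. -/
def IsMonoidHom {A B : C} (M : MonoidOn A) (N : MonoidOn B) (f : A ⟶ B) : Prop :=
  (M.m ≫ f = (f ⊗ₘ f) ≫ N.m) ∧ (M.u ≫ f = N.u)

/-- The endomorphism monoid `End(A)` on `A* ⊗ A`. -/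
def Duals.endM (P : Duals D) (A : C) : MonoidOn (P.star A ⊗ A) where
  m := (α_ (P.star A) A (P.star A ⊗ A)).hom ≫ (P.star A ◁ (α_ A (P.star A) A).inv) ≫
    (P.star A ◁ (P.η A ▷ A)) ≫ (P.star A ◁ (λ_ A).hom)
  u := P.ε A


namespace MonoidalDagger

section

variable (D)

lemma dag_injective {X Y : C} : Function.Injective (D.dag : (X ⟶ Y) → (Y ⟶ X)) :=
  Function.LeftInverse.injective D.dag_dag

lemma dag_whiskerRight {X Y : C} (f : X ⟶ Y) (Z : C) : D.dag (f ▷ Z) = D.dag f ▷ Z := by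
  rw [← tensorHom_id, D.dag_tensorHom, D.dag_id, tensorHom_id]

lemma dag_whiskerLeft (Z : C) {X Y : C} (f : X ⟶ Y) : D.dag (Z ◁ f) = Z ◁ D.dag f := by
  rw [← id_tensorHom, D.dag_tensorHom, D.dag_id, id_tensorHom]

lemma dag_associator_inv (X Y Z : C) : D.dag (α_ X Y Z).inv = (α_ X Y Z).hom := by
  rw [← D.dag_associator, D.dag_dag]

end

end MonoidalDagger

namespace PreDuals

variable (P : PreDuals D)

lemma dag_ηR (X : C) : D.dag (P.ηR X) = P.ε X :=
  (P.ε_eq_dag_ηR X).symm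

lemma ε_star_whiskerRight_eqToHom (X : C) :
    P.ε (P.star X) ≫ (eqToHom (P.star_star X) ▷ P.star X) = P.εR X := by
  have h : ∀ {Y : C} (e : Y = X),
      P.εR Y ≫ (eqToHom e ⊗ₘ eqToHom (congrArg P.star e)) = P.εR X := by
    rintro _ rfl; simp
  rw [P.ε_eq_εR_star (P.star X), ← h (P.star_star X)]
  simp only [← id_tensorHom, ← tensorHom_id, Category.assoc, tensorHom_comp_tensorHom,
    Category.comp_id, Category.id_comp]

lemma zigzag_left₁ (X : C) : X ◁ P.ε X ⊗≫ P.η X ▷ X = ⊗𝟙.hom := by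
  have h := P.triangle_left₁ X
  rw [← cancel_epi (ρ_ X).inv, ← cancel_mono (λ_ X).hom]
  simpa [monoidalComp] using h

lemma zigzag_right₁ (X : C) : P.εR X ▷ X ⊗≫ X ◁ P.ηR X = ⊗𝟙.hom := by
  have h := P.triangle_right₁ X
  rw [← cancel_epi (λ_ X).inv, ← cancel_mono (ρ_ X).hom]
  simpa [monoidalComp] using h

lemma zigzag_right₂ (X : C) : P.star X ◁ P.εR X ⊗≫ P.ηR X ▷ P.star X = ⊗𝟙.hom := by
  have h := P.triangle_right₂ X
  rw [← cancel_epi (ρ_ (P.star X)).inv, ← cancel_mono (λ_ (P.star X)).hom]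
  simpa [monoidalComp] using h

def uncurry {Z X : C} (g : Z ⟶ P.star X) : Z ⊗ X ⟶ 𝟙_ C :=
  (g ▷ X) ≫ P.ηR X

def curry {Z X : C} (f : Z ⊗ X ⟶ 𝟙_ C) : Z ⟶ P.star X :=
  (ρ_ Z).inv ≫ (Z ◁ P.εR X) ≫ (α_ Z X (P.star X)).inv ≫ (f ▷ P.star X) ≫
    (λ_ (P.star X)).hom

lemma curry_uncurry {Z X : C} (g : Z ⟶ P.star X) : P.curry (P.uncurry g) = g :=
  calc
    _ = 𝟙 _ ⊗≫ (Z ◁ P.εR X ≫ g ▷ (X ⊗ P.star X)) ⊗≫ P.ηR X ▷ P.star X ⊗≫ 𝟙 _ := by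
      dsimp only [curry, uncurry]; monoidal
    _ = g ⊗≫ (P.star X ◁ P.εR X ⊗≫ P.ηR X ▷ P.star X) ⊗≫ 𝟙 _ := by
      rw [whisker_exchange]; monoidal
    _ = g := by
      rw [P.zigzag_right₂]; monoidal

lemma uncurry_curry {Z X : C} (f : Z ⊗ X ⟶ 𝟙_ C) : P.uncurry (P.curry f) = f :=
  calc
    _ = 𝟙 _ ⊗≫ Z ◁ P.εR X ▷ X ⊗≫ (f ▷ (P.star X ⊗ X) ≫ 𝟙_ C ◁ P.ηR X) ⊗≫ 𝟙 _ := by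
      dsimp only [curry, uncurry]; monoidal
    _ = 𝟙 _ ⊗≫ Z ◁ (P.εR X ▷ X ⊗≫ X ◁ P.ηR X) ⊗≫ f ⊗≫ 𝟙 _ := by
      rw [← whisker_exchange]; monoidal
    _ = f := by
      rw [P.zigzag_right₁]; monoidal

lemma uncurry_injective {Z X : C} : Function.Injective (P.uncurry : (Z ⟶ P.star X) → _) :=
  Function.LeftInverse.injective P.curry_uncurry

lemma uncurry_comp {W Z X : C} (h : W ⟶ Z) (g : Z ⟶ P.star X) :
    P.uncurry (h ≫ g) = (h ▷ X) ≫ P.uncurry g := by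
  simp only [uncurry, comp_whiskerRight, Category.assoc]

lemma ε_whiskerRight_starL {X Y : C} (f : X ⟶ Y) :
    P.ε Y ≫ (P.starL f ▷ Y) = P.ε X ≫ (P.star X ◁ f) :=
  calc
    _ = 𝟙 _ ⊗≫ (𝟙_ C ◁ P.ε Y ≫ P.ε X ▷ (P.star Y ⊗ Y)) ⊗≫
        P.star X ◁ f ▷ P.star Y ▷ Y ⊗≫ P.star X ◁ P.η Y ▷ Y ⊗≫ 𝟙 _ := by
      dsimp only [starL]; monoidal
    _ = 𝟙 _ ⊗≫ P.ε X ▷ 𝟙_ C ⊗≫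
        ((P.star X ⊗ X) ◁ P.ε Y ≫ (P.star X ◁ f) ▷ (P.star Y ⊗ Y)) ⊗≫
        P.star X ◁ P.η Y ▷ Y ⊗≫ 𝟙 _ := by
      rw [whisker_exchange]; monoidal
    _ = 𝟙 _ ⊗≫ P.ε X ▷ 𝟙_ C ⊗≫ (P.star X ◁ f) ▷ 𝟙_ C ⊗≫
        P.star X ◁ (Y ◁ P.ε Y ⊗≫ P.η Y ▷ Y) ⊗≫ 𝟙 _ := by
      rw [whisker_exchange]; monoidal
    _ = P.ε X ≫ (P.star X ◁ f) := by
      rw [P.zigzag_left₁]; monoidal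

end PreDuals

namespace Duals

variable (P : Duals D)

lemma conj_whiskerRight_ηR {X Y : C} (f : X ⟶ Y) :
    (P.conj f ▷ Y) ≫ P.ηR Y = (P.star X ◁ D.dag f) ≫ P.ηR X := by
  apply D.dag_injective
  rw [D.dag_comp, D.dag_comp, D.dag_whiskerRight, D.dag_whiskerLeft, P.dag_ηR, P.dag_ηR,
    Duals.conj, D.dag_dag, D.dag_dag, P.ε_whiskerRight_starL]

lemma uncurry_comp_conj {Z X Y : C} (g : Z ⟶ P.star X) (f : X ⟶ Y) :
    P.uncurry (g ≫ P.conj f) = (Z ◁ D.dag f) ≫ P.uncurry g := by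
  rw [PreDuals.uncurry, comp_whiskerRight, Category.assoc, P.conj_whiskerRight_ηR,
    ← Category.assoc, ← whisker_exchange, Category.assoc, PreDuals.uncurry]

lemma sL_eq_curry {A : C} (M : MonoidOn A) : P.sL M = P.curry (M.m ≫ D.dag M.u) := by
  rw [Duals.sL, PreDuals.curry, P.ε_star_whiskerRight_eqToHom]

lemma uncurry_sL {A : C} (M : MonoidOn A) : P.uncurry (P.sL M) = M.m ≫ D.dag M.u := by
  rw [sL_eq_curry, PreDuals.uncurry_curry]

end Duals

namespace MonoidOn

variable {A : C} {M : MonoidOn A}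

lemma IsDagFrobenius.m_eq_pairing (hM : M.IsMonoid) (hF : M.IsDagFrobenius D) :
    M.m = (A ◁ D.dag M.m) ≫ (α_ A A A).inv ≫ ((M.m ≫ D.dag M.u) ▷ A) ≫ (λ_ A).hom := by
  have hcounit : D.dag M.m ≫ (D.dag M.u ▷ A) ≫ (λ_ A).hom = 𝟙 A := by
    apply D.dag_injective
    rw [D.dag_comp, D.dag_comp, D.dag_whiskerRight, D.dag_dag, D.dag_dag, D.dag_leftUnitor,
      Category.assoc, hM.1, Iso.inv_hom_id, D.dag_id]
  rw [comp_whiskerRight, Category.assoc, reassoc_of% hF.2, hcounit, Category.comp_id]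

lemma isDagFrobenius_of_m_eq_pairing (hM : M.IsMonoid)
    (h : M.m = (A ◁ D.dag M.m) ≫ (α_ A A A).inv ≫ ((M.m ≫ D.dag M.u) ▷ A) ≫ (λ_ A).hom) :
    M.IsDagFrobenius D := by
  have hdag : D.dag M.m =
      (λ_ A).inv ≫ (D.dag (M.m ≫ D.dag M.u) ▷ A) ≫ (α_ A A A).hom ≫ (A ◁ M.m) := by
    conv_lhs => rw [h]
    rw [D.dag_comp, D.dag_comp, D.dag_comp, D.dag_whiskerLeft, D.dag_whiskerRight,
      D.dag_dag, D.dag_leftUnitor, D.dag_associator_inv, Category.assoc, Category.assoc]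
  have hfrob₁ : (D.dag M.m ▷ A) ≫ (α_ A A A).hom ≫ (A ◁ M.m) = M.m ≫ D.dag M.m :=
    calc (D.dag M.m ▷ A) ≫ (α_ A A A).hom ≫ (A ◁ M.m)
        = 𝟙 _ ⊗≫ (D.dag (M.m ≫ D.dag M.u) ▷ (A ⊗ A)) ⊗≫ (A ◁ ((M.m ▷ A) ≫ M.m)) ⊗≫
            𝟙 _ := by
          rw [hdag]; monoidal
      _ = 𝟙 _ ⊗≫ ((D.dag (M.m ≫ D.dag M.u) ▷ (A ⊗ A)) ≫ ((A ⊗ A) ◁ M.m)) ⊗≫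
            (A ◁ M.m) ⊗≫ 𝟙 _ := by
          rw [hM.2.2]; monoidal
      _ = 𝟙 _ ⊗≫ ((𝟙_ C ◁ M.m) ≫ (D.dag (M.m ≫ D.dag M.u) ▷ A)) ⊗≫ (A ◁ M.m) ⊗≫ 𝟙 _ := by
          rw [← whisker_exchange]
      _ = M.m ≫ D.dag M.m := by
          rw [hdag]; monoidal
  refine ⟨hfrob₁, D.dag_injective ?_⟩
  simpa only [D.dag_comp, D.dag_whiskerRight, D.dag_whiskerLeft, D.dag_associator_inv,
    D.dag_dag, Category.assoc] using hfrob₁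

end MonoidOn

section Transport

variable {A B : C} {M : MonoidOn A} {N : MonoidOn B} {p : A ⟶ B}

lemma IsMonoidHom.m_eq (hp : IsMonoidHom M N p) (hiso : p ≫ D.dag p = 𝟙 A) :
    M.m = (p ⊗ₘ p) ≫ N.m ≫ D.dag p := by
  rw [← reassoc_of% hp.1, hiso, Category.comp_id]

lemma IsMonoidHom.dag_m_eq (hp : IsMonoidHom M N p) (hiso : p ≫ D.dag p = 𝟙 A) :
    D.dag M.m = p ≫ D.dag N.m ≫ (D.dag p ⊗ₘ D.dag p) := by
  rw [hp.m_eq hiso, D.dag_comp, D.dag_comp, D.dag_tensorHom, D.dag_dag, Category.assoc]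

lemma IsMonoidHom.tensorHom_comp_pairing (hp : IsMonoidHom M N p)
    (hiso : p ≫ D.dag p = 𝟙 A) :
    (p ⊗ₘ p) ≫ N.m ≫ D.dag N.u = M.m ≫ D.dag M.u := by
  have hu : M.u = N.u ≫ D.dag p := by rw [← hp.2, Category.assoc, hiso, Category.comp_id]
  rw [hu, D.dag_comp, D.dag_dag, reassoc_of% hp.1]

lemma IsMonoidHom.m_eq_pairing_of_isometry (hp : IsMonoidHom M N p) (hiso : p ≫ D.dag p = 𝟙 A)
    (hpair : (p ▷ B) ≫ N.m ≫ D.dag N.u = (A ◁ D.dag p) ≫ M.m ≫ D.dag M.u)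
    (hN : N.m = (B ◁ D.dag N.m) ≫ (α_ B B B).inv ≫ ((N.m ≫ D.dag N.u) ▷ B) ≫ (λ_ B).hom) :
    M.m = (A ◁ D.dag M.m) ≫ (α_ A A A).inv ≫ ((M.m ≫ D.dag M.u) ▷ A) ≫ (λ_ A).hom :=
  calc M.m = (A ◁ p) ≫ ((p ▷ B) ≫ N.m) ≫ D.dag p := by
        rw [hp.m_eq hiso, tensorHom_def', Category.assoc, Category.assoc]
    _ = 𝟙 _ ⊗≫ A ◁ (p ≫ D.dag N.m) ⊗≫ ((p ▷ B ≫ N.m ≫ D.dag N.u) ▷ B) ⊗≫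
          (𝟙_ C ◁ D.dag p) ⊗≫ 𝟙 _ := by
        conv_lhs => rw [hN]
        simp only [Category.assoc]; rw [← whisker_exchange_assoc]; monoidal
    _ = 𝟙 _ ⊗≫ A ◁ (p ≫ D.dag N.m) ⊗≫ ((A ◁ D.dag p) ▷ B) ⊗≫
          ((M.m ≫ D.dag M.u) ▷ B ≫ 𝟙_ C ◁ D.dag p) ⊗≫ 𝟙 _ := by
        rw [hpair]; monoidal
    _ = 𝟙 _ ⊗≫ A ◁ (p ≫ D.dag N.m) ⊗≫ ((A ◁ D.dag p) ▷ B) ⊗≫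
          ((A ⊗ A) ◁ D.dag p ≫ (M.m ≫ D.dag M.u) ▷ A) ⊗≫ 𝟙 _ := by
        rw [← whisker_exchange]
    _ = _ := by
        rw [hp.dag_m_eq hiso, MonoidalCategory.tensorHom_def]; monoidal

end Transport

namespace Duals

variable (P : Duals D) {A B : C} {M : MonoidOn A} {N : MonoidOn B} {p : A ⟶ B}
  {s : A ⟶ P.star A}

lemma whiskerRight_pairing_of_comp_sL (hip : p ≫ P.sL N = s ≫ P.conj p) :
    (p ▷ B) ≫ N.m ≫ D.dag N.u = (A ◁ D.dag p) ≫ P.uncurry s := by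
  rw [← P.uncurry_sL, ← PreDuals.uncurry_comp, hip, uncurry_comp_conj]

lemma eq_sL_of_isometry (hp : IsMonoidHom M N p) (hiso : p ≫ D.dag p = 𝟙 A)
    (hip : p ≫ P.sL N = s ≫ P.conj p) : s = P.sL M := by
  apply P.uncurry_injective
  rw [uncurry_sL, ← hp.tensorHom_comp_pairing hiso, tensorHom_def', Category.assoc,
    P.whiskerRight_pairing_of_comp_sL hip, ← whiskerLeft_comp_assoc, hiso, whiskerLeft_id,
    Category.id_comp]

end Duals

theorem stmt14_general {C : Type*} [Category C] [MonoidalCategory C] {D : MonoidalDagger C}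
    (P : Duals D) {A B : C} (M : MonoidOn A) (N : MonoidOn B)
    (hM : M.IsMonoid) (hN : N.IsMonoid) (hFN : N.IsDagFrobenius D)
    (s : A ⟶ P.star A)
    (p : A ⟶ B) (hiso : p ≫ D.dag p = 𝟙 A)
    (hhom : IsMonoidHom M N p)
    (hip : p ≫ P.sL N = s ≫ P.conj p) :
    M.IsDagFrobenius D ∧ s = P.sL M := by
  have hsL : s = P.sL M := P.eq_sL_of_isometry hhom hiso hip
  have hpair : (p ▷ B) ≫ N.m ≫ D.dag N.u = (A ◁ D.dag p) ≫ M.m ≫ D.dag M.u := by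
    rw [P.whiskerRight_pairing_of_comp_sL hip, hsL, P.uncurry_sL]
  refine ⟨MonoidOn.isDagFrobenius_of_m_eq_pairing hM ?_, hsL⟩
  exact hhom.m_eq_pairing_of_isometry hiso hpair (hFN.m_eq_pairing hN)

theorem stmt14 {C : Type*} [Category C] [MonoidalCategory C] {D : MonoidalDagger C}
    (P : Duals D) {A B : C} (M : MonoidOn A) (N : MonoidOn B)
    (hM : M.IsMonoid) (hN : N.IsMonoid) (hFN : N.IsDagFrobenius D)
    (s : A ⟶ P.star A) (hs : P.IsInvolutionMonoid M s)
    (p : A ⟶ B) (hiso : p ≫ D.dag p = 𝟙 A)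
    (hhom : IsMonoidHom M N p)
    (hip : p ≫ P.sL N = s ≫ P.conj p) :
    M.IsDagFrobenius D ∧ s = P.sL M :=
  stmt14_general P M N hM hN hFN s p hiso hhom hip

end QAlg
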